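/- Let α > 0 and set z_d = (1-√(1+α²))/2, t_d = (z_d + iα/2)/((1+iα)z_d), τ = t - t_d, and let ψ(t) = log(t(1 - z_d t)) - (1-iα)log(t-1). Then the third-order Taylor coefficient of ψ(t) - ψ(t_d) in τ, namely ψ'''(t_d)/6, equals A = -((1+iα)³/(6α²√(1+α²)))·{α²(-3+√(1+α²)) + 4(-1+√(1+α²))}, and A ≠ 0. -/

import Mathlib

/-!
By the chain rule, `ψ''' = 2/t³ - 2z³/(1-zt)³ - 2c/(t-1)³` at every point where the arguments
of both logarithms lie in the slit plane. Put `γ = iα` and `r = √(1+α²)`, so that `r² = 1 - γ²`.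
The saddle then simplifies to `t_d = (1-γ-r)/(r(r-1))`, and the three terms become
`r(r-1)`-multiples of `(r ∓ (1-γ))⁻¹` and `(γ(1-γ))⁻¹`. The relation
`(r - (1-γ))(r + (1-γ)) = 2γ(1-γ)` collapses the sum of cubes to `(1+γ)³(r-1)³/(γ²r)`.
For real `α ≠ 0` the points `t_d - 1` and `t_d(1 - z_d t_d)` have nonzero imaginary part,
so they lie in the slit plane, and `A` has no vanishing factor.
-/

open Complex Filter Topology

/-- `ψ` with `z = z_d` and `c = 1 - iα`. -/
noncomputable def phase (z c t : ℂ) : ℂ := log (t * (1 - z * t)) - c * log (t - 1)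

/-- `t_d`, written with `r = √(1+α²)` and `γ = iα`. -/
noncomputable def saddle (r γ : ℂ) : ℂ := ((1 - r) / 2 + γ / 2) / ((1 + γ) * ((1 - r) / 2))

theorem iteratedDeriv_inv_linear {𝕜 : Type*} [NontriviallyNormedField 𝕜] (k : ℕ) (a b x : 𝕜) :
    iteratedDeriv k (fun x => (a * x + b)⁻¹) x =
      (-1) ^ k * k.factorial * a ^ k * (a * x + b) ^ (-1 - k : ℤ) := by
  rw [iteratedDeriv_eq_iterate, iter_deriv_inv_linear]

section Phase

variable {z c t : ℂ}

theorem hasDerivAt_phase (h₁ : t * (1 - z * t) ∈ slitPlane) (h₂ : t - 1 ∈ slitPlane) :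
    HasDerivAt (phase z c) (t⁻¹ - z * (1 - z * t)⁻¹ - c * (t - 1)⁻¹) t := by
  have ht : t ≠ 0 := left_ne_zero_of_mul (slitPlane_ne_zero h₁)
  have hzt : 1 - z * t ≠ 0 := right_ne_zero_of_mul (slitPlane_ne_zero h₁)
  have h := (((hasDerivAt_id t).mul (((hasDerivAt_id t).const_mul z).const_sub 1)).clog h₁).sub
    ((((hasDerivAt_id t).sub_const 1).clog h₂).const_mul c)
  refine h.congr_deriv ?_
  simp only [id, Pi.mul_apply]
  field_simp
  ring

theorem iteratedDeriv_two_deriv_phase (h₀ : t ≠ 0) (h₁ : 1 - z * t ≠ 0) (h₂ : t - 1 ≠ 0) :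
    iteratedDeriv 2 (fun t => t⁻¹ - z * (1 - z * t)⁻¹ - c * (t - 1)⁻¹) t =
      2 / t ^ 3 - 2 * z ^ 3 / (1 - z * t) ^ 3 - 2 * c / (t - 1) ^ 3 := by
  have e : (fun t => t⁻¹ - z * (1 - z * t)⁻¹ - c * (t - 1)⁻¹) =
      fun t => (1 * t + 0)⁻¹ - z * (-z * t + 1)⁻¹ - c * (1 * t + -1)⁻¹ := by
    funext t
    ring_nf
  have h₀' : 1 * t + 0 ≠ 0 := by simpa using h₀
  have h₁' : -z * t + 1 ≠ 0 := by rwa [neg_mul, neg_add_eq_sub]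
  have h₂' : 1 * t + -1 ≠ 0 := by rwa [one_mul, ← sub_eq_add_neg]
  rw [e, iteratedDeriv_fun_sub (by fun_prop (disch := assumption))
      (by fun_prop (disch := assumption)),
    iteratedDeriv_fun_sub (by fun_prop (disch := assumption)) (by fun_prop (disch := assumption)),
    iteratedDeriv_const_mul_field, iteratedDeriv_const_mul_field, iteratedDeriv_inv_linear,
    iteratedDeriv_inv_linear, iteratedDeriv_inv_linear]
  norm_num [zpow_neg]
  rw [← sub_eq_add_neg, neg_add_eq_sub]
  ring

theorem iteratedDeriv_three_phase (h₁ : t * (1 - z * t) ∈ slitPlane) (h₂ : t - 1 ∈ slitPlane) :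
    iteratedDeriv 3 (phase z c) t =
      2 / t ^ 3 - 2 * z ^ 3 / (1 - z * t) ^ 3 - 2 * c / (t - 1) ^ 3 := by
  have hderiv : deriv (phase z c) =ᶠ[𝓝 t] fun t => t⁻¹ - z * (1 - z * t)⁻¹ - c * (t - 1)⁻¹ := by
    have hU₁ := (by fun_prop : Continuous fun t : ℂ => t * (1 - z * t)).continuousAt.eventually_mem
      (isOpen_slitPlane.mem_nhds h₁)
    have hU₂ := (by fun_prop : Continuous fun t : ℂ => t - 1).continuousAt.eventually_mem
      (isOpen_slitPlane.mem_nhds h₂)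
    filter_upwards [hU₁, hU₂] with s hs₁ hs₂ using (hasDerivAt_phase hs₁ hs₂).deriv
  rw [iteratedDeriv_succ', hderiv.iteratedDeriv_eq]
  exact iteratedDeriv_two_deriv_phase (left_ne_zero_of_mul (slitPlane_ne_zero h₁))
    (right_ne_zero_of_mul (slitPlane_ne_zero h₁)) (slitPlane_ne_zero h₂)

end Phase

section Saddle

variable {r γ : ℂ}

theorem saddle_eq (h : r ^ 2 = 1 - γ ^ 2) (hr₀ : r ≠ 0) (hr₁ : r ≠ 1) :
    saddle r γ = (1 - γ - r) / (r * (r - 1)) := by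
  have hγ : 1 + γ ≠ 0 := by
    rintro hγ
    apply hr₀
    have : r ^ 2 = 0 := by linear_combination h + (1 - γ) * hγ
    simpa using this
  have : r - 1 ≠ 0 := sub_ne_zero.2 hr₁
  have : 1 - r ≠ 0 := sub_ne_zero.2 hr₁.symm
  rw [saddle]
  field_simp
  linear_combination (1 - r) * h

theorem one_sub_mul_saddle (h : r ^ 2 = 1 - γ ^ 2) (hr₀ : r ≠ 0) (hr₁ : r ≠ 1) :
    1 - (1 - r) / 2 * saddle r γ = (r + (1 - γ)) / (2 * r) := by
  have : r - 1 ≠ 0 := sub_ne_zero.2 hr₁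
  rw [saddle_eq h hr₀ hr₁]
  field_simp
  ring

theorem saddle_sub_one (h : r ^ 2 = 1 - γ ^ 2) (hr₀ : r ≠ 0) (hr₁ : r ≠ 1) :
    saddle r γ - 1 = -(γ * (1 - γ)) / (r * (r - 1)) := by
  have : r - 1 ≠ 0 := sub_ne_zero.2 hr₁
  rw [saddle_eq h hr₀ hr₁]
  field_simp
  linear_combination -h

theorem saddle_mul_one_sub_mul_saddle (h : r ^ 2 = 1 - γ ^ 2) (hr₀ : r ≠ 0) (hr₁ : r ≠ 1) :
    saddle r γ * (1 - (1 - r) / 2 * saddle r γ) = -(γ * (1 - γ)) / (r ^ 2 * (r - 1)) := by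
  have : r - 1 ≠ 0 := sub_ne_zero.2 hr₁
  rw [one_sub_mul_saddle h hr₀ hr₁, saddle_eq h hr₀ hr₁]
  field_simp
  linear_combination -h

theorem inv_cube_add_sub_inv_cube_sub (h : r ^ 2 = 1 - γ ^ 2) (hγ : γ ≠ 0) (hβ : 1 - γ ≠ 0) :
    ((r + (1 - γ)) ^ 3)⁻¹ - ((r - (1 - γ)) ^ 3)⁻¹ + (γ ^ 3 * (1 - γ) ^ 2)⁻¹ =
      (1 + γ) / (2 * γ ^ 2 * (1 - γ) ^ 2) := by
  have huv : (r - (1 - γ)) * (r + (1 - γ)) = 2 * γ * (1 - γ) := by linear_combination h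
  have huv₀ : (r - (1 - γ)) * (r + (1 - γ)) ≠ 0 := by rw [huv]; simp [hγ, hβ]
  have hu := left_ne_zero_of_mul huv₀
  have hv := right_ne_zero_of_mul huv₀
  rw [show ((r + (1 - γ)) ^ 3)⁻¹ - ((r - (1 - γ)) ^ 3)⁻¹ =
      ((r - (1 - γ)) ^ 3 - (r + (1 - γ)) ^ 3) / ((r - (1 - γ)) * (r + (1 - γ))) ^ 3 by
    field_simp, huv]
  field_simp
  linear_combination (6 * γ - 6) * h

theorem third_deriv_formula_at_saddle (h : r ^ 2 = 1 - γ ^ 2) (hr₀ : r ≠ 0) (hr₁ : r ≠ 1)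
    (hγ : γ ≠ 0) :
    2 / saddle r γ ^ 3 - 2 * ((1 - r) / 2) ^ 3 / (1 - (1 - r) / 2 * saddle r γ) ^ 3 -
        2 * (1 - γ) / (saddle r γ - 1) ^ 3 =
      (1 + γ) ^ 3 * (r - 1) ^ 3 / (γ ^ 2 * r) := by
  have hβ : 1 - γ ≠ 0 := by
    rintro hβ
    apply hr₀
    have : r ^ 2 = 0 := by linear_combination h + (1 + γ) * hβ
    simpa using this
  have huv : (r - (1 - γ)) * (r + (1 - γ)) ≠ 0 := by
    rw [show (r - (1 - γ)) * (r + (1 - γ)) = 2 * γ * (1 - γ) by linear_combination h]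
    simp [hγ, hβ]
  have : r - 1 ≠ 0 := sub_ne_zero.2 hr₁
  calc _
      = 2 * (r * (r - 1)) ^ 3 *
          (((r + (1 - γ)) ^ 3)⁻¹ - ((r - (1 - γ)) ^ 3)⁻¹ + (γ ^ 3 * (1 - γ) ^ 2)⁻¹) := by
        have hu := left_ne_zero_of_mul huv
        have hv := right_ne_zero_of_mul huv
        have hu' : 1 - γ - r ≠ 0 := by contrapose! hu; linear_combination -hu
        rw [one_sub_mul_saddle h hr₀ hr₁, saddle_sub_one h hr₀ hr₁, saddle_eq h hr₀ hr₁]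
        field_simp
        ring
    _ = 2 * (r * (r - 1)) ^ 3 * ((1 + γ) / (2 * γ ^ 2 * (1 - γ) ^ 2)) := by
        rw [inv_cube_add_sub_inv_cube_sub h hγ hβ]
    _ = (1 + γ) ^ 3 * (r - 1) ^ 3 / (γ ^ 2 * r) := by
        field_simp
        linear_combination (1 + γ) * (r ^ 2 + 1 - γ ^ 2) * h

end Saddle

theorem cubic_coeff_eq {α r : ℂ} (h : r ^ 2 = 1 + α ^ 2) :
    -((1 + I * α) ^ 3 / (6 * α ^ 2 * r)) * (α ^ 2 * (-3 + r) + 4 * (-1 + r)) =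
      (1 + I * α) ^ 3 * (r - 1) ^ 3 / ((I * α) ^ 2 * r) / 6 := by
  rw [show α ^ 2 * (-3 + r) + 4 * (-1 + r) = (r - 1) ^ 3 by linear_combination (3 - r) * h,
    mul_pow, I_sq]
  ring

theorem neg_mul_one_sub_div_mem_slitPlane {a b : ℝ} (ha : a ≠ 0) (hb : b ≠ 0) :
    -(I * a * (1 - I * a)) / (b : ℂ) ∈ slitPlane := by
  refine mem_slitPlane_iff.2 (Or.inr ?_)
  rw [div_ofReal_im]
  simp [ha, hb]

theorem saddle_mem_slitPlane {α r : ℝ} (hα : α ≠ 0) (h : (r : ℂ) ^ 2 = 1 - (I * α) ^ 2)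
    (hr₁ : 1 < r) :
    saddle r (I * α) * (1 - (1 - r) / 2 * saddle r (I * α)) ∈ slitPlane ∧
      saddle r (I * α) - 1 ∈ slitPlane := by
  have hr₀ : (r : ℂ) ≠ 0 := ofReal_ne_zero.2 (by positivity)
  have hr₁' : (r : ℂ) ≠ 1 := ofReal_ne_one.2 hr₁.ne'
  rw [saddle_mul_one_sub_mul_saddle h hr₀ hr₁', saddle_sub_one h hr₀ hr₁']
  have h₁ := neg_mul_one_sub_div_mem_slitPlane hα (b := r ^ 2 * (r - 1))
    (mul_pos (by positivity) (sub_pos.2 hr₁)).ne'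
  have h₂ := neg_mul_one_sub_div_mem_slitPlane hα (b := r * (r - 1))
    (mul_pos (by positivity) (sub_pos.2 hr₁)).ne'
  push_cast at h₁ h₂
  exact ⟨h₁, h₂⟩

/-- The third-order Taylor coefficient `ψ'''(t_d)/6` of
`ψ(t) = log(t(1 - z_d t)) - (1-iα) log(t-1)` at the double saddle `t_d` equals
`A = -((1+iα)³/(6α²√(1+α²)))·{α²(-3+√(1+α²)) + 4(-1+√(1+α²))}`, and `A ≠ 0`. -/
theorem stmt7 (α : ℝ) (hα : 0 < α) :
    let s : ℂ := (Real.sqrt (1 + α ^ 2) : ℂ)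
    let zd : ℂ := (1 - s) / 2
    let td : ℂ := (zd + I * α / 2) / ((1 + I * α) * zd)
    let A : ℂ := -((1 + I * α) ^ 3 / (6 * (α : ℂ) ^ 2 * s)) *
      ((α : ℂ) ^ 2 * (-3 + s) + 4 * (-1 + s))
    iteratedDeriv 3
        (fun t : ℂ => Complex.log (t * (1 - zd * t)) - (1 - I * α) * Complex.log (t - 1))
        td / 6 = A ∧ A ≠ 0 := by
  intro s zd td A
  set r := Real.sqrt (1 + α ^ 2)
  have hr₁ : 1 < r := Real.lt_sqrt zero_le_one |>.2 (by nlinarith)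
  have hs : s ^ 2 = 1 + (α : ℂ) ^ 2 := by
    rw [show s = (r : ℂ) from rfl, ← ofReal_pow, Real.sq_sqrt (by positivity), ofReal_add,
      ofReal_one, ofReal_pow]
  have hsγ : s ^ 2 = 1 - (I * α) ^ 2 := by rw [mul_pow, I_sq]; linear_combination hs
  have hs₀ : s ≠ 0 := ofReal_ne_zero.2 (by positivity)
  have hs₁ : s ≠ 1 := ofReal_ne_one.2 hr₁.ne'
  have hγ : I * α ≠ 0 := mul_ne_zero I_ne_zero (ofReal_ne_zero.2 hα.ne')
  obtain ⟨h₁, h₂⟩ := saddle_mem_slitPlane hα.ne' hsγ hr₁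
  have hA : A = (1 + I * α) ^ 3 * (s - 1) ^ 3 / ((I * α) ^ 2 * s) / 6 := cubic_coeff_eq hs
  refine ⟨?_, ?_⟩
  · rw [hA, ← third_deriv_formula_at_saddle hsγ hs₀ hs₁ hγ]
    exact congrArg (· / 6) (iteratedDeriv_three_phase h₁ h₂)
  · have h1γ : 1 + I * α ≠ 0 := fun h => hα.ne' (by simpa using congrArg im h)
    rw [hA]
    exact div_ne_zero (div_ne_zero (mul_ne_zero (pow_ne_zero 3 h1γ)
      (pow_ne_zero 3 (sub_ne_zero.2 hs₁))) (mul_ne_zero (pow_ne_zero 2 hγ) hs₀)) (by norm_num)
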